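/- arXiv:2605.29327 — 8 statements merged into one kernel-verified Lean document; each statement's English description precedes it below -/
import Mathlib

section
/- Let L, D, D' be positive integers, X ∈ ℝ^{L×D}, and Σ = (1/L)·XᵀX. Suppose Q : ℝ → ℝ^{D×D'} and O : ℝ → ℝ^{D'×D} are differentiable curves satisfying the gradient-flow equations Q'(t) = −Σ·(Q(t)·O(t) − I)·O(t)ᵀ and O'(t) = −Q(t)ᵀ·Σ·(Q(t)·O(t) − I) for all t ∈ ℝ. Then the map t ↦ Q(t)ᵀ·Q(t) − O(t)·O(t)ᵀ is constant; in particular, if Q(0)ᵀ·Q(0) = O(0)·O(0)ᵀ, then Q(t)ᵀ·Q(t) = O(t)·O(t)ᵀ for all t ∈ ℝ. -/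
/-!
Write `E = QO - 1`. Along the flow both `(QᵀQ)'` and `(OOᵀ)'` equal
`-(QᵀSEOᵀ + (QᵀSEOᵀ)ᵀ)`, so `QᵀQ - OOᵀ` has derivative zero everywhere and is constant
by the mean value theorem.
-/

open Matrix

attribute [local instance] Matrix.normedAddCommGroup Matrix.normedSpace

section MatrixCalculus

variable {𝕜 : Type*} [NontriviallyNormedField 𝕜] {m n p : Type*} {t : 𝕜}

theorem hasDerivAt_matrix_iff [Fintype m] [Fintype n] {f : 𝕜 → Matrix m n 𝕜}
    {f' : Matrix m n 𝕜} :
    HasDerivAt f f' t ↔ ∀ i j, HasDerivAt (fun s => f s i j) (f' i j) t :=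
  ⟨fun h i j => hasDerivAt_pi.mp (hasDerivAt_pi.mp h i) j,
    fun h => hasDerivAt_pi.mpr fun i => hasDerivAt_pi.mpr (h i)⟩

theorem HasDerivAt.matrix_mul [Fintype m] [Fintype n] [Fintype p] {f : 𝕜 → Matrix m n 𝕜}
    {g : 𝕜 → Matrix n p 𝕜} {f' : Matrix m n 𝕜} {g' : Matrix n p 𝕜}
    (hf : HasDerivAt f f' t) (hg : HasDerivAt g g' t) :
    HasDerivAt (fun s => f s * g s) (f' * g t + f t * g') t := by
  rw [hasDerivAt_matrix_iff] at hf hg ⊢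
  intro i j
  simp only [Matrix.add_apply, mul_apply, ← Finset.sum_add_distrib]
  exact HasDerivAt.fun_sum fun k _ => (hf i k).fun_mul (hg k j)

theorem HasDerivAt.matrix_transpose [Fintype m] [Fintype n] {f : 𝕜 → Matrix m n 𝕜}
    {f' : Matrix m n 𝕜} (hf : HasDerivAt f f' t) : HasDerivAt (fun s => (f s)ᵀ) f'ᵀ t :=
  hasDerivAt_matrix_iff.mpr fun i j => hasDerivAt_matrix_iff.mp hf j i

end MatrixCalculus

theorem gradientFlow_transpose_mul_self_sub_mul_transpose_deriv_eq_zero {R m n : Type*}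
    [CommRing R] [Fintype m] [Fintype n] [DecidableEq n]
    (S : Matrix n n R) (Q : Matrix n m R) (O : Matrix m n R) :
    let Q' := -(S * (Q * O - 1) * Oᵀ)
    let O' := -(Qᵀ * S * (Q * O - 1))
    Q'ᵀ * Q + Qᵀ * Q' - (O' * Oᵀ + O * O'ᵀ) = 0 := by
  simp only [transpose_neg, transpose_mul, transpose_transpose, Matrix.mul_neg, Matrix.neg_mul,
    Matrix.mul_assoc]
  abel

theorem balancedness_invariant_general (D D' : ℕ)
    (S : Matrix (Fin D) (Fin D) ℝ)
    (Q : ℝ → Matrix (Fin D) (Fin D') ℝ) (O : ℝ → Matrix (Fin D') (Fin D) ℝ)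
    (hQ : ∀ t : ℝ, HasDerivAt Q (-(S * (Q t * O t - 1) * (O t)ᵀ)) t)
    (hO : ∀ t : ℝ, HasDerivAt O (-((Q t)ᵀ * S * (Q t * O t - 1))) t) :
    (∀ s t : ℝ, (Q s)ᵀ * Q s - O s * (O s)ᵀ = (Q t)ᵀ * Q t - O t * (O t)ᵀ) ∧
    ((Q 0)ᵀ * Q 0 = O 0 * (O 0)ᵀ → ∀ t : ℝ, (Q t)ᵀ * Q t = O t * (O t)ᵀ) := by
  have hderiv (t : ℝ) : HasDerivAt (fun s => (Q s)ᵀ * Q s - O s * (O s)ᵀ) 0 t := by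
    have h := ((hQ t).matrix_transpose.matrix_mul (hQ t)).sub
      ((hO t).matrix_mul (hO t).matrix_transpose)
    rwa [gradientFlow_transpose_mul_self_sub_mul_transpose_deriv_eq_zero] at h
  have hconst := is_const_of_deriv_eq_zero (fun t => (hderiv t).differentiableAt)
    (fun t => (hderiv t).deriv)
  refine ⟨hconst, fun h0 t => ?_⟩
  rw [← sub_eq_zero, hconst t 0, h0, sub_self]

/-- **Balancedness Invariant**: along the gradient flow
`Q' = −Σ(QO − I)Oᵀ`, `O' = −QᵀΣ(QO − I)` (with `Σ = (1/L)XᵀX`), the quantity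
`QᵀQ − OOᵀ` is constant in time; in particular, if `Q(0)ᵀQ(0) = O(0)O(0)ᵀ`, then
`Q(t)ᵀQ(t) = O(t)O(t)ᵀ` for all `t`. -/
theorem balancedness_invariant (L D D' : ℕ) (hL : 0 < L) (hD : 0 < D) (hD' : 0 < D')
    (X : Matrix (Fin L) (Fin D) ℝ)
    (S : Matrix (Fin D) (Fin D) ℝ) (hS : S = (1 / (L : ℝ)) • (Xᵀ * X))
    (Q : ℝ → Matrix (Fin D) (Fin D') ℝ) (O : ℝ → Matrix (Fin D') (Fin D) ℝ)
    (hQ : ∀ t : ℝ, HasDerivAt Q (-(S * (Q t * O t - 1) * (O t)ᵀ)) t)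
    (hO : ∀ t : ℝ, HasDerivAt O (-((Q t)ᵀ * S * (Q t * O t - 1))) t) :
    (∀ s t : ℝ, (Q s)ᵀ * Q s - O s * (O s)ᵀ = (Q t)ᵀ * Q t - O t * (O t)ᵀ) ∧
    ((Q 0)ᵀ * Q 0 = O 0 * (O 0)ᵀ → ∀ t : ℝ, (Q t)ᵀ * Q t = O t * (O t)ᵀ) :=
  balancedness_invariant_general D D' S Q O hQ hO
end

section
/- Let D' ≤ D be positive integers, Q ∈ ℝ^{D×D'} and O ∈ ℝ^{D'×D} satisfy the balancedness condition Qᵀ·Q = O·Oᵀ, and set M = Q·O ∈ ℝ^{D×D}. Then the multiset of eigenvalues (with multiplicity) of the symmetric matrix Mᵀ·M equals the multiset of squares of the eigenvalues (with multiplicity) of the symmetric matrix Qᵀ·Q, together with D − D' additional zeros. Equivalently, the singular values of Q and of O coincide, and for each r the r-th singular value of M equals the square of the r-th singular value of Q (singular values being listed in nonincreasing order). -/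
/-! Balancedness rewrites `MᵀM = OᵀQᵀQO` as `(OᵀO)²`, so the spectrum of `MᵀM` consists of the
squares of the eigenvalues of `OᵀO`. Since `OOᵀ = QᵀQ`, the characteristic polynomials of `OᵀO`
and `QᵀQ` differ by the factor `X ^ (D - D')`, so these eigenvalues are those of `QᵀQ` together
with `D - D'` zeros. -/

open Matrix Polynomial

theorem Polynomial.roots_prod_X_sub_C_univ {R ι : Type*} [CommRing R] [IsDomain R] [Fintype ι]
    (g : ι → R) : (∏ i, (X - C (g i))).roots = Finset.univ.val.map g := by
  have h := roots_multiset_prod_X_sub_C (Finset.univ.val.map g)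
  rwa [Multiset.map_map, ← Finset.prod_eq_multiset_prod] at h

namespace Matrix

theorem roots_charpoly_mul_of_card_le {R m n : Type*} [CommRing R] [IsDomain R]
    [Fintype m] [Fintype n] [DecidableEq m] [DecidableEq n]
    (A : Matrix m n R) (B : Matrix n m R) (h : Fintype.card n ≤ Fintype.card m) :
    (A * B).charpoly.roots =
      (B * A).charpoly.roots + Multiset.replicate (Fintype.card m - Fintype.card n) 0 := by
  rw [charpoly_mul_comm_of_le A B h,
    roots_mul (mul_ne_zero (pow_ne_zero _ X_ne_zero) (charpoly_monic _).ne_zero),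
    roots_X_pow, Multiset.nsmul_singleton, add_comm]

namespace IsHermitian

variable {𝕜 n : Type*} [RCLike 𝕜] [Fintype n] [DecidableEq n] {A : Matrix n n 𝕜}

theorem roots_charpoly_mul_self (hA : A.IsHermitian) :
    (A * A).charpoly.roots = A.charpoly.roots.map (· ^ 2) := by
  rw [← sq, ← cfc_pow_id (R := ℝ) A 2 hA.isSelfAdjoint, hA.charpoly_cfc_eq, hA.charpoly_eq,
    roots_prod_X_sub_C_univ, roots_prod_X_sub_C_univ, Multiset.map_map]
  simp

theorem roots_charpoly_eq_map_eigenvalues {A : Matrix n n ℝ} (hA : A.IsHermitian) :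
    A.charpoly.roots = Multiset.map hA.eigenvalues Finset.univ.val := by
  simpa using hA.roots_charpoly_eq_eigenvalues

end IsHermitian

end Matrix

theorem spectral_coupling_general (D D' : ℕ) (hDD : D' ≤ D)
    (Q : Matrix (Fin D) (Fin D') ℝ) (O : Matrix (Fin D') (Fin D) ℝ)
    (hbal : Qᵀ * Q = O * Oᵀ)
    (M : Matrix (Fin D) (Fin D) ℝ) (hM : M = Q * O)
    (hMH : (Mᵀ * M).IsHermitian) (hQH : (Qᵀ * Q).IsHermitian) :
    Multiset.map hMH.eigenvalues Finset.univ.val =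
      Multiset.map (fun i => (hQH.eigenvalues i) ^ 2) Finset.univ.val +
        Multiset.replicate (D - D') (0 : ℝ) := by
  have hN : (Oᵀ * O).IsHermitian := by simpa using isHermitian_conjTranspose_mul_self O
  have hMM : Mᵀ * M = (Oᵀ * O) * (Oᵀ * O) := by
    rw [hM, transpose_mul, Matrix.mul_assoc, ← Matrix.mul_assoc Qᵀ, hbal]
    simp only [Matrix.mul_assoc]
  rw [← hMH.roots_charpoly_eq_map_eigenvalues, hMM, hN.roots_charpoly_mul_self,
    roots_charpoly_mul_of_card_le Oᵀ O (by simpa using hDD), ← hbal,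
    hQH.roots_charpoly_eq_map_eigenvalues, Multiset.map_add, Multiset.map_map,
    Multiset.map_replicate]
  simp

/-- **Spectral Coupling**: under the balancedness condition `QᵀQ = OOᵀ` with `M = QO`,
the multiset of eigenvalues (with multiplicity) of the symmetric matrix `MᵀM` equals
the multiset of squares of the eigenvalues (with multiplicity) of the symmetric matrix
`QᵀQ`, together with `D − D'` additional zeros. -/
theorem spectral_coupling (D D' : ℕ) (hD' : 0 < D') (hDD : D' ≤ D)
    (Q : Matrix (Fin D) (Fin D') ℝ) (O : Matrix (Fin D') (Fin D) ℝ)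
    (hbal : Qᵀ * Q = O * Oᵀ)
    (M : Matrix (Fin D) (Fin D) ℝ) (hM : M = Q * O)
    (hMH : (Mᵀ * M).IsHermitian) (hQH : (Qᵀ * Q).IsHermitian) :
    Multiset.map hMH.eigenvalues Finset.univ.val =
      Multiset.map (fun i => (hQH.eigenvalues i) ^ 2) Finset.univ.val +
        Multiset.replicate (D - D') (0 : ℝ) :=
  spectral_coupling_general D D' hDD Q O hbal M hM hMH hQH
end

section
/- Let D, D' be positive integers and Σ ∈ ℝ^{D×D} be symmetric. Let Q ∈ ℝ^{D×D'}, O ∈ ℝ^{D'×D} satisfy Qᵀ·Q = O·Oᵀ, and define the gradient-flow velocities Q̇ = −Σ·(Q·O − I)·Oᵀ and Ȯ = −Qᵀ·Σ·(Q·O − I). Set M = Q·O. Suppose σ ∈ ℝ and u, v ∈ ℝ^D are unit vectors satisfying M·v = σ·u, Mᵀ·u = σ·v, (Oᵀ·O)·v = σ·v, and (Q·Qᵀ)·u = σ·u. Then uᵀ·(Q̇·O + Q·Ȯ)·v = 2σ·uᵀ·Σ·(v − σ·u). (This is the singular value dynamics: the time derivative of the singular value σ of M under the balanced gradient flow equals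 2σ·uᵀΣ(v − σu).) -/
open Matrix

/-- **Singular Value Dynamics**: under the balanced condition `QᵀQ = OOᵀ`, with
gradient-flow velocities `Q̇ = −Σ(QO − I)Oᵀ` and `Ȯ = −QᵀΣ(QO − I)`, `M = QO`, and
unit vectors `u, v` satisfying `Mv = σu`, `Mᵀu = σv`, `(OᵀO)v = σv`, `(QQᵀ)u = σu`,
we have `uᵀ(Q̇O + QȮ)v = 2σ·uᵀΣ(v − σu)`. -/
theorem singular_value_dynamics (D D' : ℕ) (hD : 0 < D) (hD' : 0 < D')
    (S : Matrix (Fin D) (Fin D) ℝ) (hS : Sᵀ = S)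
    (Q : Matrix (Fin D) (Fin D') ℝ) (O : Matrix (Fin D') (Fin D) ℝ)
    (hbal : Qᵀ * Q = O * Oᵀ)
    (Qdot : Matrix (Fin D) (Fin D') ℝ) (hQdot : Qdot = -(S * (Q * O - 1) * Oᵀ))
    (Odot : Matrix (Fin D') (Fin D) ℝ) (hOdot : Odot = -(Qᵀ * S * (Q * O - 1)))
    (M : Matrix (Fin D) (Fin D) ℝ) (hM : M = Q * O)
    (σ : ℝ) (u v : Fin D → ℝ)
    (hu : ∑ i, (u i) ^ 2 = 1) (hv : ∑ i, (v i) ^ 2 = 1)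
    (hMv : M.mulVec v = σ • u) (hMtu : Mᵀ.mulVec u = σ • v)
    (hOv : (Oᵀ * O).mulVec v = σ • v) (hQu : (Q * Qᵀ).mulVec u = σ • u) :
    ∑ i, ∑ j, u i * (Qdot * O + Q * Odot) i j * v j =
      2 * σ * ∑ i, ∑ j, u i * S i j * (v j - σ * u j) := by
  subst hQdot hOdot hM
  have key : ∀ (A : Matrix (Fin D) (Fin D) ℝ) (w : Fin D → ℝ),
      ∑ i, ∑ j, u i * A i j * w j = u ⬝ᵥ (A *ᵥ w) := by
    intro A w
    simp [dotProduct, mulVec, Finset.mul_sum, mul_assoc]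
  have hw : (Q * O - 1) *ᵥ v = σ • u - v := by
    rw [sub_mulVec, hMv, one_mulVec]
  have h1 : ((-(S * (Q * O - 1) * Oᵀ)) * O) *ᵥ v = σ • (S *ᵥ (v - σ • u)) := by
    have e : (-(S * (Q * O - 1) * Oᵀ)) * O = -(S * ((Q * O - 1) * (Oᵀ * O))) := by
      simp only [Matrix.neg_mul, Matrix.mul_assoc]
    rw [e, neg_mulVec, ← mulVec_mulVec, ← mulVec_mulVec, hOv, mulVec_smul, hw,
        mulVec_smul, ← smul_neg, ← mulVec_neg, neg_sub]
  have h2 : (Q * (-(Qᵀ * S * (Q * O - 1)))) *ᵥ v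
      = -((Q * Qᵀ) *ᵥ (S *ᵥ (σ • u - v))) := by
    have e : Q * (-(Qᵀ * S * (Q * O - 1))) = -((Q * Qᵀ) * (S * (Q * O - 1))) := by
      simp only [Matrix.mul_neg, Matrix.mul_assoc]
    rw [e, neg_mulVec, ← hw]
    simp [mulVec_mulVec, Matrix.mul_assoc]
  have hQQ : ∀ w, u ⬝ᵥ ((Q * Qᵀ) *ᵥ w) = σ * (u ⬝ᵥ w) := by
    intro w
    rw [dotProduct_mulVec, ← mulVec_transpose, transpose_mul, transpose_transpose,
        hQu, smul_dotProduct, smul_eq_mul]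
  rw [key, add_mulVec, h1, h2, dotProduct_add, dotProduct_smul, dotProduct_neg, hQQ]
  have hflip : u ⬝ᵥ (S *ᵥ (σ • u - v)) = -(u ⬝ᵥ (S *ᵥ (v - σ • u))) := by
    rw [← dotProduct_neg, ← mulVec_neg, neg_sub]
  rw [hflip]
  have key2 : ∑ i, ∑ j, u i * S i j * (v j - σ * u j) = u ⬝ᵥ (S *ᵥ (v - σ • u)) := by
    simpa using key S (v - σ • u)
  rw [key2]
  simp only [smul_eq_mul]
  ring
end

section
/- Let L, D be positive integers and X ∈ ℝ^{L×D} be a nonzero matrix whose rows X^1, …, X^L all have Euclidean norm 1. Then trace((X·Xᵀ)²) ≥ L² / eRank(X); equivalently, ‖X·Xᵀ‖_F² ≥ L² / eRank(X). -/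
open Matrix

/-- `XᵀX` is Hermitian (symmetric) for a real matrix `X`. -/
theorem xtx_isHermitian {L D : ℕ} (X : Matrix (Fin L) (Fin D) ℝ) :
    (Xᵀ * X).IsHermitian := by
  simpa [Matrix.conjTranspose_eq_transpose_of_trivial] using
    Matrix.isHermitian_conjTranspose_mul_self X

/-- The effective rank `eRank(X) = exp(−∑_j p_j log p_j)`, where `λ_1, …, λ_D` are the
eigenvalues (with multiplicity) of the positive semidefinite matrix `XᵀX` and
`p_j = λ_j / ∑_k λ_k` (with the convention `0 · log 0 = 0`). -/
noncomputable def eRank {L D : ℕ} (X : Matrix (Fin L) (Fin D) ℝ) : ℝ :=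
  Real.exp (-∑ j,
    ((xtx_isHermitian X).eigenvalues j / ∑ k, (xtx_isHermitian X).eigenvalues k) *
      Real.log
        ((xtx_isHermitian X).eigenvalues j / ∑ k, (xtx_isHermitian X).eigenvalues k))

/-! For weights `λ ≥ 0` with total `S` and `p = λ / S`, Jensen's inequality for `exp` gives
`exp (∑ p log p) ≤ ∑ p · exp (log p) = ∑ p²`, i.e. `S² · exp (∑ p log p) ≤ ∑ λ²`. The eigenvalues
of `XᵀX` sum to `trace (XᵀX) = L` when the rows are unit vectors, and their squares sum to
`trace ((XᵀX)²) = trace ((XXᵀ)²)`. -/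

theorem Real.exp_sum_mul_log_le_sum_sq {ι : Type*} [Fintype ι] {p : ι → ℝ}
    (hp : ∀ i, 0 ≤ p i) (hp_sum : ∑ i, p i = 1) :
    Real.exp (∑ i, p i * Real.log (p i)) ≤ ∑ i, p i ^ 2 := by
  calc Real.exp (∑ i, p i * Real.log (p i))
      ≤ ∑ i, p i * Real.exp (Real.log (p i)) :=
        convexOn_exp.map_sum_le (fun i _ => hp i) hp_sum (fun i _ => Set.mem_univ _)
    _ = ∑ i, p i ^ 2 := by
        refine Finset.sum_congr rfl fun i _ => ?_
        rcases (hp i).eq_or_lt with h0 | h0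
        · simp [← h0]
        · rw [Real.exp_log h0, sq]

theorem sq_sum_div_exp_entropy_le_sum_sq {ι : Type*} [Fintype ι] {w : ι → ℝ}
    (hw : ∀ i, 0 ≤ w i) :
    (∑ i, w i) ^ 2 / Real.exp (-∑ i, (w i / ∑ k, w k) * Real.log (w i / ∑ k, w k)) ≤
      ∑ i, w i ^ 2 := by
  set S := ∑ k, w k
  have hS_nonneg : 0 ≤ S := Finset.sum_nonneg fun i _ => hw i
  rcases hS_nonneg.eq_or_lt with hS | hS
  · rw [← hS, sq, zero_mul, zero_div]
    exact Finset.sum_nonneg fun i _ => sq_nonneg _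
  have hp_sum : ∑ i, w i / S = 1 := by rw [← Finset.sum_div, div_self hS.ne']
  calc S ^ 2 / Real.exp (-∑ i, (w i / S) * Real.log (w i / S))
      = S ^ 2 * Real.exp (∑ i, (w i / S) * Real.log (w i / S)) := by
        rw [Real.exp_neg, div_inv_eq_mul]
    _ ≤ S ^ 2 * ∑ i, (w i / S) ^ 2 := by
        gcongr
        exact Real.exp_sum_mul_log_le_sum_sq (fun i => div_nonneg (hw i) hS.le) hp_sum
    _ = ∑ i, w i ^ 2 := by
        rw [Finset.mul_sum]
        exact Finset.sum_congr rfl fun i _ => by field_simp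

namespace Matrix

theorem trace_transpose_mul_self {m n R : Type*} [Fintype m] [Fintype n] [CommSemiring R]
    (X : Matrix m n R) : (Xᵀ * X).trace = ∑ i, ∑ j, X i j ^ 2 := by
  simp only [trace, diag_apply, mul_apply, transpose_apply, sq]
  exact Finset.sum_comm

theorem trace_mul_mul_self_comm {m n R : Type*} [Fintype m] [Fintype n] [CommSemiring R]
    (A : Matrix m n R) (B : Matrix n m R) :
    (A * B * (A * B)).trace = (B * A * (B * A)).trace := by
  rw [Matrix.mul_assoc, trace_mul_comm]
  simp only [Matrix.mul_assoc]

theorem IsHermitian.trace_mul_self_eq_sum_sq_eigenvalues {𝕜 n : Type*} [RCLike 𝕜] [Fintype n]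
    [DecidableEq n] {A : Matrix n n 𝕜} (hA : A.IsHermitian) :
    (A * A).trace = ∑ i, (hA.eigenvalues i : 𝕜) ^ 2 := by
  conv_lhs => rw [hA.spectral_theorem, ← map_mul, Unitary.conjStarAlgAut_apply, trace_mul_cycle,
    Unitary.coe_star_mul_self, one_mul, diagonal_mul_diagonal, trace_diagonal]
  simp [sq]

end Matrix

theorem trace_sq_ge_sq_div_eRank_general (L D : ℕ)
    (X : Matrix (Fin L) (Fin D) ℝ)
    (hrow : ∀ l, ∑ j, (X l j) ^ 2 = 1) :
    Matrix.trace ((X * Xᵀ) * (X * Xᵀ)) ≥ (L : ℝ) ^ 2 / _root_.eRank X := by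
  have hA := xtx_isHermitian X
  have h_eig_nonneg : ∀ j, 0 ≤ hA.eigenvalues j :=
    (by simpa using posSemidef_conjTranspose_mul_self X : (Xᵀ * X).PosSemidef).eigenvalues_nonneg
  have h_eig_sum : ∑ j, hA.eigenvalues j = L := by
    have h_trace := hA.trace_eq_sum_eigenvalues
    rw [trace_transpose_mul_self] at h_trace
    simpa [hrow] using h_trace.symm
  calc (L : ℝ) ^ 2 / _root_.eRank X
      = (∑ j, hA.eigenvalues j) ^ 2 / _root_.eRank X := by rw [h_eig_sum]
    _ ≤ ∑ j, hA.eigenvalues j ^ 2 := sq_sum_div_exp_entropy_le_sum_sq h_eig_nonneg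
    _ = ((X * Xᵀ) * (X * Xᵀ)).trace := by
        rw [trace_mul_mul_self_comm, hA.trace_mul_self_eq_sum_sq_eigenvalues,
          RCLike.ofReal_real_eq_id, Function.id_def]

/-- If the rows of a nonzero matrix `X ∈ ℝ^{L×D}` all have Euclidean norm 1, then
`trace((XXᵀ)²) ≥ L² / eRank(X)`, i.e. `‖XXᵀ‖_F² ≥ L² / eRank(X)`. -/
theorem trace_sq_ge_sq_div_eRank (L D : ℕ) (hL : 0 < L) (hD : 0 < D)
    (X : Matrix (Fin L) (Fin D) ℝ) (hX : X ≠ 0)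
    (hrow : ∀ l, ∑ j, (X l j) ^ 2 = 1) :
    Matrix.trace ((X * Xᵀ) * (X * Xᵀ)) ≥ (L : ℝ) ^ 2 / _root_.eRank X :=
  trace_sq_ge_sq_div_eRank_general L D X hrow
end

section
/- Let L ≥ 2 and D ≥ 1 be integers and X ∈ ℝ^{L×D} be a matrix whose rows X^1, …, X^L all have Euclidean norm 1. Then the maximum over pairs of distinct indices l1 ≠ l2 of the absolute cosine similarity ρ_{l1,l2} = |⟨X^{l1}, X^{l2}⟩| satisfies max_{l1 ≠ l2} ρ_{l1,l2} ≥ √( (1/(L−1)) · (L/eRank(X) − 1) ). -/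
/-!
Let `λ` be the eigenvalues of `XᵀX` and `p = λ / ∑ λ`. Jensen's inequality for the concave
logarithm gives `-∑ p log p ≥ -log ∑ p²`, hence `eRank X ≥ (tr XᵀX)² / tr ((XᵀX)²)`.
Unit rows give `tr XᵀX = L`, and `tr ((XᵀX)²) = tr ((XXᵀ)²)` is the sum of the squared entries
of the Gram matrix `XXᵀ`: `L` ones on the diagonal and `L (L - 1)` off-diagonal entries, each
of square at most `(max ρ)²`. Therefore `L / eRank X ≤ 1 + (L - 1) (max ρ)²`.
-/

open Matrix

open Finset Real

theorem Matrix.IsHermitian.trace_mul_self_eq_sum_eigenvalues_sq {𝕜 n : Type*} [RCLike 𝕜]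
    [Fintype n] [DecidableEq n] {A : Matrix n n 𝕜} (hA : A.IsHermitian) :
    (A * A).trace = ∑ i, (hA.eigenvalues i : 𝕜) ^ 2 := by
  conv_lhs => rw [hA.spectral_theorem]
  rw [← map_mul, diagonal_mul_diagonal, Unitary.conjStarAlgAut_apply, trace_mul_cycle,
    Unitary.coe_star_mul_self, one_mul, trace_diagonal]
  simp [sq]

theorem Matrix.trace_mul_self_eq_sum_sq_of_isSymm {n R : Type*} [Fintype n] [CommSemiring R]
    {G : Matrix n n R} (hG : G.IsSymm) : (G * G).trace = ∑ i, ∑ k, G i k ^ 2 := by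
  simp only [trace, diag, mul_apply, sq]
  refine sum_congr rfl fun i _ => sum_congr rfl fun k _ => ?_
  rw [hG.apply i k]

theorem Matrix.trace_mul_self_transpose_mul_self {m n R : Type*} [Fintype m] [Fintype n]
    [CommSemiring R] (X : Matrix m n R) :
    ((Xᵀ * X) * (Xᵀ * X)).trace = ∑ i, ∑ k, (X * Xᵀ) i k ^ 2 := by
  rw [Matrix.mul_assoc, trace_mul_comm, Matrix.mul_assoc, Matrix.mul_assoc, ← Matrix.mul_assoc X]
  exact trace_mul_self_eq_sum_sq_of_isSymm (by rw [IsSymm, transpose_mul, transpose_transpose])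

theorem sum_sq_le_of_diag_eq_one_of_abs_le {ι : Type*} [Fintype ι] {G : Matrix ι ι ℝ} {M : ℝ}
    (hdiag : ∀ i, G i i = 1) (hoff : ∀ i k, i ≠ k → |G i k| ≤ M) :
    ∑ i, ∑ k, G i k ^ 2 ≤ Fintype.card ι * (1 + (Fintype.card ι - 1) * M ^ 2) := by
  classical
  rw [← nsmul_eq_mul, ← card_univ, ← sum_const]
  refine sum_le_sum fun i _ => ?_
  rw [← add_sum_erase _ _ (mem_univ i), hdiag, one_pow]
  gcongr
  calc ∑ k ∈ univ.erase i, G i k ^ 2 ≤ (univ.erase i).card • M ^ 2 :=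
        sum_le_card_nsmul _ _ _ fun k hk =>
          sq_le_sq.mpr ((hoff i k (ne_of_mem_erase hk).symm).trans (le_abs_self M))
    _ = (Fintype.card ι - 1) * M ^ 2 := by
        rw [card_erase_of_mem (mem_univ i), nsmul_eq_mul, card_univ,
          Nat.cast_pred (Fintype.card_pos_iff.mpr ⟨i⟩)]

theorem inv_sum_sq_le_exp_neg_sum_mul_log {ι : Type*} [Fintype ι] {p : ι → ℝ}
    (hp : ∀ i, 0 ≤ p i) (hsum : ∑ i, p i = 1) :
    (∑ i, p i ^ 2)⁻¹ ≤ exp (-∑ i, p i * log (p i)) := by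
  classical
  -- `log` is concave only on `(0, ∞)`, so Jensen is applied on the support of `p`.
  set t := univ.filter fun i => p i ≠ 0
  have hent : ∑ i ∈ t, p i * log (p i) = ∑ i, p i * log (p i) :=
    sum_filter_of_ne fun i _ => left_ne_zero_of_mul
  have hsq : ∑ i ∈ t, p i * p i = ∑ i, p i ^ 2 := by
    simp_rw [sq]
    exact sum_filter_of_ne fun i _ => left_ne_zero_of_mul
  have hjensen : ∑ i ∈ t, p i • log (p i) ≤ log (∑ i ∈ t, p i • p i) :=
    strictConcaveOn_log_Ioi.concaveOn.le_map_sum (fun i _ => hp i)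
      (by rw [sum_filter_ne_zero, hsum]) fun i hi => (hp i).lt_of_ne' (mem_filter.mp hi).2
  simp only [smul_eq_mul, hent, hsq] at hjensen
  have hpos : 0 < ∑ i, p i ^ 2 := by
    obtain ⟨i, -, hi⟩ := exists_ne_zero_of_sum_ne_zero (hsum.trans_ne one_ne_zero)
    exact sum_pos' (fun i _ => sq_nonneg _) ⟨i, mem_univ i, by positivity⟩
  rw [← exp_log (inv_pos.mpr hpos), log_inv, exp_le_exp, neg_le_neg_iff]
  exact hjensen

theorem eRank_pos {L D : ℕ} (X : Matrix (Fin L) (Fin D) ℝ) : 0 < _root_.eRank X :=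
  exp_pos _

theorem sq_trace_le_eRank_mul_trace_mul_self {L D : ℕ} (X : Matrix (Fin L) (Fin D) ℝ) :
    (Xᵀ * X).trace ^ 2 ≤ _root_.eRank X * ((Xᵀ * X) * (Xᵀ * X)).trace := by
  set hA := xtx_isHermitian X
  set ev := hA.eigenvalues
  have hev : ∀ j, 0 ≤ ev j := by
    have hpsd := posSemidef_conjTranspose_mul_self X
    rw [conjTranspose_eq_transpose_of_trivial] at hpsd
    exact hpsd.eigenvalues_nonneg
  rw [hA.trace_eq_sum_eigenvalues, hA.trace_mul_self_eq_sum_eigenvalues_sq]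
  simp only [RCLike.ofReal_real_eq_id, id]
  set T := ∑ j, ev j
  rcases eq_or_ne T 0 with hT | hT
  · rw [hT, sq, zero_mul]
    exact mul_nonneg (eRank_pos X).le (sum_nonneg fun j _ => sq_nonneg _)
  set p := fun j => ev j / T
  have hp : ∀ j, 0 ≤ p j := fun j => div_nonneg (hev j) (sum_nonneg fun k _ => hev k)
  have hpsum : ∑ j, p j = 1 := by rw [← sum_div, div_self hT]
  have hpsq : ∑ j, p j ^ 2 = (∑ j, ev j ^ 2) / T ^ 2 := by simp only [p, div_pow, sum_div]
  have hS : 0 < ∑ j, ev j ^ 2 := by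
    obtain ⟨j, -, hj⟩ := exists_ne_zero_of_sum_ne_zero hT
    exact sum_pos' (fun i _ => sq_nonneg _) ⟨j, mem_univ j, by positivity⟩
  have hrenyi : (∑ j, p j ^ 2)⁻¹ ≤ _root_.eRank X := inv_sum_sq_le_exp_neg_sum_mul_log hp hpsum
  rw [hpsq, inv_div, div_le_iff₀ hS] at hrenyi
  exact hrenyi

theorem max_abs_cosine_ge_general (L D : ℕ) (hL : 2 ≤ L)
    (X : Matrix (Fin L) (Fin D) ℝ)
    (hrow : ∀ l, ∑ j, (X l j) ^ 2 = 1)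
    (hne : (Finset.univ.filter fun p : Fin L × Fin L => p.1 ≠ p.2).Nonempty) :
    Real.sqrt ((1 / ((L : ℝ) - 1)) * ((L : ℝ) / _root_.eRank X - 1)) ≤
      (Finset.univ.filter fun p : Fin L × Fin L => p.1 ≠ p.2).sup' hne
        (fun p => |∑ j, X p.1 j * X p.2 j|) := by
  set ρ : Fin L × Fin L → ℝ := fun p => |∑ j, X p.1 j * X p.2 j|
  set M := (univ.filter fun p : Fin L × Fin L => p.1 ≠ p.2).sup' hne ρ
  have hM : 0 ≤ M := hne.elim fun p hp => (abs_nonneg _).trans (le_sup' ρ hp)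
  have hdiag : ∀ l, (X * Xᵀ) l l = 1 := fun l => by simpa [mul_apply, sq] using hrow l
  have hoff : ∀ l₁ l₂, l₁ ≠ l₂ → |(X * Xᵀ) l₁ l₂| ≤ M := fun l₁ l₂ h =>
    le_sup' ρ (b := (l₁, l₂)) (by simpa using h)
  have htrace : (Xᵀ * X).trace = L := by
    rw [trace_mul_comm]
    simp [trace, hdiag]
  have hfrob : ((Xᵀ * X) * (Xᵀ * X)).trace ≤ L * (1 + (L - 1) * M ^ 2) := by
    simpa [trace_mul_self_transpose_mul_self] using sum_sq_le_of_diag_eq_one_of_abs_le hdiag hoff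
  have hL1 : (0 : ℝ) < L - 1 := sub_pos.mpr (by exact_mod_cast hL)
  have hbound : (L : ℝ) ≤ _root_.eRank X * (1 + (L - 1) * M ^ 2) := by
    refine le_of_mul_le_mul_left ?_ (hL1.trans (sub_lt_self _ one_pos))
    calc (L : ℝ) * L = (Xᵀ * X).trace ^ 2 := by rw [htrace, sq]
      _ ≤ _root_.eRank X * ((Xᵀ * X) * (Xᵀ * X)).trace := sq_trace_le_eRank_mul_trace_mul_self X
      _ ≤ _root_.eRank X * (L * (1 + (L - 1) * M ^ 2)) :=
        mul_le_mul_of_nonneg_left hfrob (eRank_pos X).le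
      _ = L * (_root_.eRank X * (1 + (L - 1) * M ^ 2)) := by ring
  rw [sqrt_le_left hM, one_div, inv_mul_le_iff₀ hL1, sub_le_iff_le_add,
    div_le_iff₀ (eRank_pos X)]
  linarith

/-- **Representation Distinguishability Bound**: if `L ≥ 2` and the rows of
`X ∈ ℝ^{L×D}` all have Euclidean norm 1, then the maximum over distinct index pairs
of the absolute cosine similarity `|⟨X^{l1}, X^{l2}⟩|` is at least
`√((1/(L−1)) · (L/eRank(X) − 1))`. -/
theorem max_abs_cosine_ge (L D : ℕ) (hL : 2 ≤ L) (hD : 1 ≤ D)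
    (X : Matrix (Fin L) (Fin D) ℝ)
    (hrow : ∀ l, ∑ j, (X l j) ^ 2 = 1)
    (hne : (Finset.univ.filter fun p : Fin L × Fin L => p.1 ≠ p.2).Nonempty) :
    Real.sqrt ((1 / ((L : ℝ) - 1)) * ((L : ℝ) / _root_.eRank X - 1)) ≤
      (Finset.univ.filter fun p : Fin L × Fin L => p.1 ≠ p.2).sup' hne
        (fun p => |∑ j, X p.1 j * X p.2 j|) :=
  max_abs_cosine_ge_general L D hL X hrow hne
end

section
/- Let n be a positive integer and define the softmax map on ℝ^n by softmax(z)_i = exp(z_i) / ∑_{j} exp(z_j). Then softmax is 1-Lipschitz with respect to the Euclidean norm: for all z_1, z_2 ∈ ℝ^n, ‖softmax(z_1) − softmax(z_2)‖_2 ≤ ‖z_1 − z_2‖_2. -/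
/-! Write `p = softmax z`. The derivative of softmax at `z` in direction `v` is the vector
`p i * (v i - ∑ j, p j * v j)`. Since `0 ≤ p i ≤ 1`, its squared norm is at most the
`p`-weighted variance of `v`, which is at most the `p`-weighted second moment
`∑ i, p i * v i ^ 2 ≤ ∑ i, v i ^ 2`. So the derivative has operator norm at most `1`, and the
mean value inequality along the segment from `z₂` to `z₁` gives the Lipschitz bound. -/

open Finset Real WithLp

section

variable {ι : Type*} [Fintype ι]

theorem sum_sq_mul_sub_weighted_mean_le {p : ι → ℝ} (hp_nonneg : ∀ i, 0 ≤ p i)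
    (hp_sum : ∑ i, p i ≤ 1) (x : ι → ℝ) :
    ∑ i, (p i * (x i - ∑ j, p j * x j)) ^ 2 ≤ ∑ i, x i ^ 2 := by
  set S := ∑ j, p j * x j
  have hp_le_one (i : ι) : p i ≤ 1 :=
    (single_le_sum (fun j _ => hp_nonneg j) (mem_univ i)).trans hp_sum
  have hvariance :
      ∑ i, p i * (x i - S) ^ 2 = ∑ i, p i * x i ^ 2 - S ^ 2 * (2 - ∑ i, p i) := by
    have hexpand (i : ι) :
        p i * (x i - S) ^ 2 = p i * x i ^ 2 - 2 * S * (p i * x i) + S ^ 2 * p i := by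
      ring
    rw [sum_congr rfl fun i _ => hexpand i, sum_add_distrib, sum_sub_distrib, ← mul_sum, ← mul_sum]
    ring
  calc ∑ i, (p i * (x i - S)) ^ 2 ≤ ∑ i, p i * (x i - S) ^ 2 := by
        gcongr with i
        rw [mul_pow]
        exact mul_le_mul_of_nonneg_right
          (pow_le_of_le_one (hp_nonneg i) (hp_le_one i) two_ne_zero) (sq_nonneg _)
    _ ≤ ∑ i, p i * x i ^ 2 := by
        rw [hvariance]; nlinarith [sq_nonneg S]
    _ ≤ ∑ i, x i ^ 2 := by
        gcongr with i
        exact mul_le_of_le_one_left (sq_nonneg _) (hp_le_one i)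

namespace Real

noncomputable def softmax (z : ι → ℝ) : ι → ℝ := fun i => exp (z i) / ∑ j, exp (z j)

theorem softmax_nonneg (z : ι → ℝ) (i : ι) : 0 ≤ softmax z i := by
  unfold softmax; positivity

theorem sum_softmax_le_one (z : ι → ℝ) : ∑ i, softmax z i ≤ 1 := by
  simp only [softmax]; rw [← sum_div]; exact div_self_le_one _

theorem hasDerivAt_softmax_add_smul (z v : ι → ℝ) (t : ℝ) :
    HasDerivAt (fun t : ℝ => softmax (z + t • v))
      (fun i => softmax (z + t • v) i * (v i - ∑ j, softmax (z + t • v) j * v j)) t := by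
  refine hasDerivAt_pi.2 fun i => ?_
  have hexp (k : ι) :
      HasDerivAt (fun t : ℝ => exp (z k + t * v k)) (exp (z k + t * v k) * v k) t := by
    simpa using ((hasDerivAt_id t).mul_const (v k)).const_add (z k) |>.exp
  have hpos : 0 < ∑ j, exp (z j + t * v j) :=
    sum_pos' (fun j _ => (exp_pos _).le) ⟨i, mem_univ i, exp_pos _⟩
  refine ((hexp i).fun_div (HasDerivAt.fun_sum fun k _ => hexp k) hpos.ne').congr_deriv ?_
  simp only [softmax, Pi.add_apply, Pi.smul_apply, smul_eq_mul, div_mul_eq_mul_div, ← sum_div]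
  field_simp

theorem lipschitzWith_softmax :
    LipschitzWith 1 fun z : EuclideanSpace ℝ ι => toLp 2 (softmax (ofLp z)) := by
  refine LipschitzWith.of_dist_le_mul fun w z => ?_
  rw [NNReal.coe_one, one_mul, dist_eq_norm, dist_eq_norm]
  set v := ofLp w - ofLp z
  let γ (t : ℝ) : EuclideanSpace ℝ ι := toLp 2 (softmax (ofLp z + t • v))
  let γ' (t : ℝ) : EuclideanSpace ℝ ι := toLp 2 fun i =>
    softmax (ofLp z + t • v) i * (v i - ∑ j, softmax (ofLp z + t • v) j * v j)
  have hγ (t : ℝ) : HasDerivAt γ (γ' t) t :=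
    (PiLp.hasFDerivAt_toLp (𝕜 := ℝ) 2 _).comp_hasDerivAt
      (f := fun t => softmax (ofLp z + t • v)) t (hasDerivAt_softmax_add_smul _ _ t)
  have hγ' (t : ℝ) : ‖γ' t‖ ≤ ‖w - z‖ := by
    rw [EuclideanSpace.norm_eq, EuclideanSpace.norm_eq]
    apply Real.sqrt_le_sqrt
    simp only [Real.norm_eq_abs, sq_abs]
    exact sum_sq_mul_sub_weighted_mean_le (softmax_nonneg _) (sum_softmax_le_one _) v
  have hmvt := norm_image_sub_le_of_norm_deriv_le_segment_01'
    (fun t _ => (hγ t).hasDerivWithinAt) fun t _ => hγ' t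
  simpa [γ, v] using hmvt

end Real

end

theorem softmax_lipschitz_general (n : ℕ)
    (softmax : (Fin n → ℝ) → (Fin n → ℝ))
    (hsm : ∀ z i, softmax z i = Real.exp (z i) / ∑ j, Real.exp (z j)) :
    ∀ z1 z2 : Fin n → ℝ,
      Real.sqrt (∑ i, (softmax z1 i - softmax z2 i) ^ 2) ≤
        Real.sqrt (∑ i, (z1 i - z2 i) ^ 2) := by
  have hsoftmax : softmax = Real.softmax := funext fun z => funext (hsm z)
  intro z1 z2
  simpa [hsoftmax, EuclideanSpace.dist_eq, Real.dist_eq, sq_abs] using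
    lipschitzWith_softmax.dist_le_mul (toLp 2 z1) (toLp 2 z2)

/-- **Softmax is 1-Lipschitz** with respect to the Euclidean norm:
for `softmax(z)_i = exp(z_i) / ∑_j exp(z_j)` on `ℝ^n`,
`‖softmax(z₁) − softmax(z₂)‖₂ ≤ ‖z₁ − z₂‖₂`. -/
theorem softmax_lipschitz (n : ℕ) (hn : 0 < n)
    (softmax : (Fin n → ℝ) → (Fin n → ℝ))
    (hsm : ∀ z i, softmax z i = Real.exp (z i) / ∑ j, Real.exp (z j)) :
    ∀ z1 z2 : Fin n → ℝ,
      Real.sqrt (∑ i, (softmax z1 i - softmax z2 i) ^ 2) ≤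
        Real.sqrt (∑ i, (z1 i - z2 i) ^ 2) :=
  softmax_lipschitz_general n softmax hsm
end

section
/- Let L, D be positive integers and X ∈ ℝ^{L×D} be a matrix that is zero-centered (∑_{l} X^l = 0 as a vector in ℝ^D) and row-normalized (each row X^l has Euclidean norm 1), and suppose eRank(X) = 1. Then rank(X) = 1, and for every index l, either X^l = X^1 or X^l = −X^1, where X^1 denotes the first row of X. -/
open Matrix

/-!
An effective rank of one means that the normalised spectrum `p` of `XᵀX` has zero Shannon
entropy. Every term `p_j log p_j` is nonpositive, so each vanishes and `p` is a point mass: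
`XᵀX`, hence `X`, has rank one. All rows then lie on one line, and since they all have norm
one, each is `±` the first row.
-/

open Real

lemma Real.eq_zero_or_eq_one_of_mul_log_eq_zero {x : ℝ} (hx : 0 ≤ x) (h : x * log x = 0) :
    x = 0 ∨ x = 1 := by
  rcases mul_eq_zero.mp h with h | h
  · exact Or.inl h
  · rcases log_eq_zero.mp h with h | h | h
    · exact Or.inl h
    · exact Or.inr h
    · linarith

theorem card_ne_zero_eq_one_of_sum_mul_log_eq_zero {ι : Type*} [Fintype ι] {p : ι → ℝ}
    (hp0 : ∀ i, 0 ≤ p i) (hp1 : ∑ i, p i = 1) (hent : ∑ i, p i * log (p i) = 0) :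
    Fintype.card {i // p i ≠ 0} = 1 := by
  classical
  have hle : ∀ i, p i ≤ 1 := fun i =>
    hp1 ▸ Finset.single_le_sum (fun j _ => hp0 j) (Finset.mem_univ i)
  have hterm := (Finset.sum_eq_zero_iff_of_nonpos fun i _ => mul_log_nonpos (hp0 i) (hle i)).mp
    hent
  have hindicator : ∀ i, p i = if p i ≠ 0 then 1 else 0 := fun i => by
    rcases eq_zero_or_eq_one_of_mul_log_eq_zero (hp0 i) (hterm i (Finset.mem_univ i)) with h | h
      <;> simp [h]
  have hcard : ((Fintype.card {i // p i ≠ 0} : ℕ) : ℝ) = 1 := by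
    rw [← hp1, Finset.sum_congr rfl fun i _ => hindicator i, Finset.sum_boole,
      Fintype.card_subtype]
  exact_mod_cast hcard

theorem rank_eq_one_of_eRank_eq_one {L D : ℕ} {X : Matrix (Fin L) (Fin D) ℝ} (hX : X ≠ 0)
    (h : _root_.eRank X = 1) : X.rank = 1 := by
  set hH := xtx_isHermitian X
  set T := ∑ k, hH.eigenvalues k
  have hpsd : (Xᵀ * X).PosSemidef := by
    simpa only [conjTranspose_eq_transpose_of_trivial] using posSemidef_conjTranspose_mul_self X
  have hT : T = (Xᵀ * X).trace := by simp [T, hH.trace_eq_sum_eigenvalues]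
  have hTpos : 0 < T := by
    refine hT ▸ hpsd.trace_nonneg.lt_of_ne' fun h0 => hX ?_
    rwa [← conjTranspose_eq_transpose_of_trivial, trace_conjTranspose_mul_self_eq_zero_iff] at h0
  have hent : ∑ j, hH.eigenvalues j / T * log (hH.eigenvalues j / T) = 0 := by
    rwa [_root_.eRank, exp_eq_one_iff, neg_eq_zero] at h
  have hcard := card_ne_zero_eq_one_of_sum_mul_log_eq_zero
    (fun j => div_nonneg (hpsd.eigenvalues_nonneg j) hTpos.le)
    (by rw [← Finset.sum_div, div_self hTpos.ne']) hent
  rw [← rank_transpose_mul_self, hH.rank_eq_card_non_zero_eigs, ← hcard]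
  exact Fintype.card_congr <| Equiv.subtypeEquivRight fun j => by simp [hTpos.ne']

theorem exists_smul_row_eq_of_rank_eq_one {m n K : Type*} [Finite m] [Fintype n] [Field K]
    {A : Matrix m n K} (hA : A.rank = 1) {i : m} (hi : A i ≠ 0) (k : m) :
    ∃ c : K, c • A i = A k := by
  rw [rank_eq_finrank_span_row] at hA
  let row : m → Submodule.span K (Set.range A.row) := fun j =>
    ⟨A j, Submodule.subset_span ⟨j, rfl⟩⟩
  obtain ⟨c, hc⟩ := (finrank_eq_one_iff_of_nonzero' (row i) (by simpa [row] using hi)).mp hA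
    (row k)
  exact ⟨c, congrArg Subtype.val hc⟩

theorem eq_or_eq_neg_of_smul_eq_of_sum_sq_eq {ι : Type*} [Fintype ι] {x y : ι → ℝ} {c : ℝ}
    (h : c • y = x) (hxy : ∑ i, x i ^ 2 = ∑ i, y i ^ 2) (hy : ∑ i, y i ^ 2 ≠ 0) :
    x = y ∨ x = -y := by
  subst h
  simp only [Pi.smul_apply, smul_eq_mul, mul_pow, ← Finset.mul_sum] at hxy
  rcases sq_eq_one_iff.mp ((mul_eq_right₀ hy).mp hxy) with rfl | rfl <;> simp

theorem binary_state_collapse_general (L D : ℕ) (hL : 0 < L)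
    (X : Matrix (Fin L) (Fin D) ℝ)
    (hrow : ∀ l, ∑ j, (X l j) ^ 2 = 1)
    (heRank : _root_.eRank X = 1) :
    X.rank = 1 ∧ ∀ l, X l = X ⟨0, hL⟩ ∨ X l = -X ⟨0, hL⟩ := by
  have hrow₀ : X ⟨0, hL⟩ ≠ 0 := by
    intro h
    simpa [h] using hrow ⟨0, hL⟩
  have hrank := rank_eq_one_of_eRank_eq_one (fun h => hrow₀ (congrFun h _)) heRank
  refine ⟨hrank, fun l => ?_⟩
  obtain ⟨c, hc⟩ := exists_smul_row_eq_of_rank_eq_one hrank hrow₀ l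
  exact eq_or_eq_neg_of_smul_eq_of_sum_sq_eq hc ((hrow l).trans (hrow _).symm) (by simp [hrow])

/-- **Binary State Collapse**: if `X ∈ ℝ^{L×D}` is zero-centered (`∑_l X^l = 0`) and
row-normalized (each row has Euclidean norm 1) with `eRank(X) = 1`, then
`rank(X) = 1` and every row equals the first row or its negation. -/
theorem binary_state_collapse (L D : ℕ) (hL : 0 < L) (hD : 0 < D)
    (X : Matrix (Fin L) (Fin D) ℝ)
    (hcent : ∑ l : Fin L, X l = 0)
    (hrow : ∀ l, ∑ j, (X l j) ^ 2 = 1)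
    (heRank : _root_.eRank X = 1) :
    X.rank = 1 ∧ ∀ l, X l = X ⟨0, hL⟩ ∨ X l = -X ⟨0, hL⟩ :=
  binary_state_collapse_general L D hL X hrow heRank
end

section
/- Let D' ≤ D be positive integers, G : Fin D' → Fin D be injective, and H ∈ ℝ^{D×D'} be the selection matrix with H_{ij} = 1 if i = G(j) and H_{ij} = 0 otherwise. Let Σ ∈ ℝ^{D×D} be symmetric. Set M = H·Hᵀ and define the initial gradient-flow velocity Ṁ = −Σ·(M − I)·M − M·Σ·(M − I) (obtained by substituting Q = H, O = Hᵀ into Ṁ = Q̇·O + Q·Ȯ with Q̇ = −Σ(QO−I)Oᵀ and Ȯ = −QᵀΣ(QO−I)). Then for every vector u ∈ ℝ^D satisfying M·u = u or M·u = 0, one has uᵀ·Ṁ·u = 0. (Hence, since the singular values of M at initialization lie in {0,1} with singular vector pairs u = v, the initial time derivative of every singular value of M vanishes.) -/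
open Matrix

/-- **Vanishing Initial Dynamics**: for the selection matrix `H` built from an
injective `G : Fin D' → Fin D`, a symmetric `Σ`, `M = HHᵀ`, and the initial
gradient-flow velocity `Ṁ = −Σ(M − I)M − MΣ(M − I)`, every vector `u` with
`Mu = u` or `Mu = 0` satisfies `uᵀ·Ṁ·u = 0`. -/
theorem vanishing_initial_dynamics (D D' : ℕ) (hD' : 0 < D') (hDD : D' ≤ D)
    (G : Fin D' → Fin D) (hG : Function.Injective G)
    (H : Matrix (Fin D) (Fin D') ℝ)
    (hH : ∀ i j, H i j = if i = G j then 1 else 0)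
    (S : Matrix (Fin D) (Fin D) ℝ) (hS : Sᵀ = S)
    (M : Matrix (Fin D) (Fin D) ℝ) (hM : M = H * Hᵀ)
    (Mdot : Matrix (Fin D) (Fin D) ℝ)
    (hMdot : Mdot = -(S * (M - 1) * M) - M * S * (M - 1))
    (u : Fin D → ℝ) (hu : M.mulVec u = u ∨ M.mulVec u = 0) :
    ∑ i, ∑ j, u i * Mdot i j * u j = 0 := by
  have hMT : Mᵀ = M := by
    rw [hM, transpose_mul, transpose_transpose]
  have hform : ∑ i, ∑ j, u i * Mdot i j * u j = u ⬝ᵥ Mdot.mulVec u := by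
    simp [dotProduct, mulVec, Finset.mul_sum, mul_assoc]
  rw [hform, hMdot]
  have h1 : u ⬝ᵥ (S * (M - 1) * M).mulVec u = 0 := by
    rcases hu with h | h
    · have : (M - 1).mulVec u = 0 := by
        simp [sub_mulVec, h]
      rw [← mulVec_mulVec, h, ← mulVec_mulVec, this, mulVec_zero, dotProduct_zero]
    · rw [← mulVec_mulVec, h, mulVec_zero, dotProduct_zero]
  have h2 : u ⬝ᵥ (M * S * (M - 1)).mulVec u = 0 := by
    rcases hu with h | h
    · have h0 : (M - 1).mulVec u = 0 := by simp [sub_mulVec, h]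
      rw [← mulVec_mulVec, h0, mulVec_zero, dotProduct_zero]
    · have h0 : vecMul u M = 0 := by
        rw [← hMT, vecMul_transpose, h]
      rw [dotProduct_mulVec, mul_assoc, ← vecMul_vecMul, h0, zero_vecMul,
        zero_dotProduct]
  simp [mulVec_add, sub_eq_add_neg, neg_mulVec, dotProduct_add, dotProduct_neg,
    h1, h2, ← sub_eq_add_neg, sub_mulVec]
end
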